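/- Let (H, g) be a pivotal Hopf G-coalgebra over a field k, let μ be a right G-integral for H, and let μ̃_α(x) := μ_α(g_α x) be the associated symmetrised right G-integral. Then for all α, β ∈ G, x ∈ H_α and y ∈ H_β one has μ̃_{αβ}(x_{(1)}) · S_{β⁻¹}(x_{(2)}) y = μ̃_α(x) · g_β y in H_β, where Δ_{αβ,β⁻¹}(x) = x_{(1)} ⊗ x_{(2)} (using H_α = H_{(αβ)β⁻¹}). -/

import Mathlib

open scoped TensorProduct

/-- Transport along an equality of indices, as an algebra isomorphism. -/
def castAlg (k : Type) [CommSemiring k] {G : Type} {H : G → Type}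
    [∀ γ : G, Ring (H γ)] [∀ γ : G, Algebra k (H γ)]
    {γ γ' : G} (h : γ = γ') : H γ ≃ₐ[k] H γ' := by
  subst h; exact AlgEquiv.refl

/-- A Hopf `G`-coalgebra over a field `k`. -/
structure HopfGCoalgebra (k G : Type) [Field k] [Group G] (H : G → Type)
    [∀ γ : G, Ring (H γ)] [∀ γ : G, Algebra k (H γ)] where
  Δ : ∀ α β : G, H (α * β) →ₐ[k] (H α ⊗[k] H β)
  ε : H (1 : G) →ₐ[k] k
  S : ∀ γ : G, H γ →ₗ[k] H γ⁻¹
  coassoc : ∀ (α β γ : G) (x : H (α * β * γ)),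
    (TensorProduct.map (Δ α β).toLinearMap LinearMap.id) (Δ (α * β) γ x)
      = (TensorProduct.assoc k (H α) (H β) (H γ)).symm
          ((TensorProduct.map LinearMap.id (Δ β γ).toLinearMap)
            (Δ α (β * γ) (castAlg k (mul_assoc α β γ) x)))
  counit_right : ∀ (α : G) (x : H (α * 1)),
    (TensorProduct.rid k (H α)) ((TensorProduct.map LinearMap.id ε.toLinearMap) (Δ α 1 x))
      = castAlg k (mul_one α) x
  counit_left : ∀ (α : G) (x : H (1 * α)),
    (TensorProduct.lid k (H α)) ((TensorProduct.map ε.toLinearMap LinearMap.id) (Δ 1 α x))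
      = castAlg k (one_mul α) x
  antipode_left : ∀ (α : G) (x : H (α⁻¹ * α)),
    (LinearMap.mul' k (H α))
      ((TensorProduct.map ((castAlg k (inv_inv α)).toLinearMap ∘ₗ S α⁻¹) LinearMap.id)
        (Δ α⁻¹ α x))
      = ε (castAlg k (inv_mul_cancel α) x) • 1
  antipode_right : ∀ (α : G) (x : H (α * α⁻¹)),
    (LinearMap.mul' k (H α))
      ((TensorProduct.map LinearMap.id ((castAlg k (inv_inv α)).toLinearMap ∘ₗ S α⁻¹))
        (Δ α α⁻¹ x))
      = ε (castAlg k (mul_inv_cancel α) x) • 1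

namespace HopfGCoalgebra

variable {k G : Type} [Field k] [Group G] {H : G → Type}
  [∀ γ : G, Ring (H γ)] [∀ γ : G, Algebra k (H γ)]

/-- A family of linear forms is a right `G`-integral. -/
def IsRightIntegral (D : HopfGCoalgebra k G H) (μ : ∀ γ : G, H γ →ₗ[k] k) : Prop :=
  ∀ (α β : G) (x : H (α * β)),
    (TensorProduct.lid k (H β)) ((TensorProduct.map (μ α) LinearMap.id) (D.Δ α β x))
      = μ (α * β) x • 1

/-- A family of linear forms is a left `G`-integral. -/
def IsLeftIntegral (D : HopfGCoalgebra k G H) (μ : ∀ γ : G, H γ →ₗ[k] k) : Prop :=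
  ∀ (α β : G) (x : H (α * β)),
    (TensorProduct.rid k (H α)) ((TensorProduct.map LinearMap.id (μ β)) (D.Δ α β x))
      = μ (α * β) x • 1

/-- A family of invertible elements is a pivot. -/
structure IsPivot (D : HopfGCoalgebra k G H) (g : ∀ γ : G, (H γ)ˣ) : Prop where
  delta : ∀ α β : G, D.Δ α β (g (α * β) : H (α * β)) = (g α : H α) ⊗ₜ[k] (g β : H β)
  counit : D.ε (g 1 : H 1) = 1
  antipode : ∀ (α : G) (x : H α),
    castAlg k (inv_inv α) (D.S α⁻¹ (D.S α x)) = (g α : H α) * x * ((g α)⁻¹ : (H α)ˣ)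

/-- `H` is unimodular if `H₁` admits a nonzero two-sided cointegral. -/
def IsUnimodular (D : HopfGCoalgebra k G H) : Prop :=
  ∃ Λ : H 1, Λ ≠ 0 ∧ ∀ h : H 1, h * Λ = D.ε h • Λ ∧ Λ * h = D.ε h • Λ

/-- A `G`-comodulus for a right `G`-integral `μ`. -/
structure IsComodulus (D : HopfGCoalgebra k G H) (μ : ∀ γ : G, H γ →ₗ[k] k)
    (a : ∀ γ : G, (H γ)ˣ) : Prop where
  delta : ∀ α β : G, D.Δ α β (a (α * β) : H (α * β)) = (a α : H α) ⊗ₜ[k] (a β : H β)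
  counit : D.ε (a 1 : H 1) = 1
  rel : ∀ (α β : G) (x : H (α * β)),
    (TensorProduct.rid k (H α)) ((TensorProduct.map LinearMap.id (μ β)) (D.Δ α β x))
      = μ (α * β) x • (a α : H α)

end HopfGCoalgebra

/-! Since `g` is grouplike and `Δ` multiplicative, `μ̃_{αβ}(x₍₁₎) ⊗ x₍₂₎` is
`μ_{αβ}((g_α x)₍₁₎) ⊗ g_{β⁻¹}⁻¹ (g_α x)₍₂₎`, so the right integral property collapses the left
side to `μ_α(g_α x) · S_{β⁻¹}(g_{β⁻¹}⁻¹) y`. Finally `S_{β⁻¹}(g_{β⁻¹}⁻¹) = S_{β⁻¹}(S_β(g_β)) = g_β`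
by the antipode axiom for grouplikes and the pivotal formula for `S²`. -/

namespace HopfGCoalgebra

variable {k G : Type} [Field k] [Group G] {H : G → Type}
  [∀ γ : G, Ring (H γ)] [∀ γ : G, Algebra k (H γ)]

omit [Group G] in
lemma castAlg_unit (u : ∀ γ : G, (H γ)ˣ) {γ γ' : G} (h : γ = γ') :
    castAlg k h (u γ : H γ) = u γ' := by
  subst h; rfl

omit [Group G] in
lemma map_castAlg (μ : ∀ γ : G, H γ →ₗ[k] k) {γ γ' : G} (h : γ = γ') (x : H γ) :
    μ γ' (castAlg k h x) = μ γ x := by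
  subst h; rfl

omit [Group G] in
lemma castAlg_castAlg {γ γ' γ'' : G} (h : γ = γ') (h' : γ' = γ'') (x : H γ) :
    castAlg k h' (castAlg k h x) = castAlg k (h.trans h') x := by
  subst h h'; rfl

omit [Group G] in
@[simp]
lemma castAlg_refl {γ : G} (h : γ = γ) (x : H γ) : castAlg k h x = x := rfl

lemma S_castAlg (D : HopfGCoalgebra k G H) {γ γ' : G} (h : γ = γ') (x : H γ) :
    D.S γ' (castAlg k h x) = castAlg k (congrArg Inv.inv h) (D.S γ x) := by
  subst h; rfl

lemma castAlg_S_of_grouplike (D : HopfGCoalgebra k G H) (g : ∀ γ : G, (H γ)ˣ)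
    (hΔ : ∀ α β : G, D.Δ α β (g (α * β) : H (α * β)) = (g α : H α) ⊗ₜ[k] (g β : H β))
    (hε : D.ε (g 1 : H 1) = 1) (α : G) :
    castAlg k (inv_inv α) (D.S α⁻¹ (g α⁻¹ : H α⁻¹)) = ↑(g α)⁻¹ := by
  have h := D.antipode_left α (g (α⁻¹ * α))
  rw [hΔ, TensorProduct.map_tmul, LinearMap.mul'_apply, castAlg_unit, hε, one_smul] at h
  exact Units.eq_inv_of_mul_eq_one_right h

lemma IsPivot.castAlg_S_inv {D : HopfGCoalgebra k G H} {g : ∀ γ : G, (H γ)ˣ}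
    (hpiv : D.IsPivot g) (β : G) :
    castAlg k (inv_inv β) (D.S β⁻¹ ↑(g β⁻¹)⁻¹) = (g β : H β) := by
  have hS : D.S β (g β) = ↑(g β⁻¹)⁻¹ := by
    simpa [← castAlg_unit (k := k) g (inv_inv β).symm, S_castAlg, castAlg_castAlg]
      using castAlg_S_of_grouplike D g hpiv.delta hpiv.counit β⁻¹
  simpa [hS] using hpiv.antipode β (g β)

lemma IsRightIntegral.lid_map_Δ {D : HopfGCoalgebra k G H} {μ : ∀ γ : G, H γ →ₗ[k] k}
    (hμ : D.IsRightIntegral μ) {M : Type*} [AddCommGroup M] [Module k M] {α β : G}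
    (f : H β →ₗ[k] M) (x : H (α * β)) :
    TensorProduct.lid k M (TensorProduct.map (μ α) f (D.Δ α β x)) = μ (α * β) x • f 1 := by
  have hnat : TensorProduct.lid k M ∘ₗ TensorProduct.map (μ α) f
      = f ∘ₗ TensorProduct.lid k (H β) ∘ₗ TensorProduct.map (μ α) LinearMap.id :=
    TensorProduct.ext' fun a b => by simp
  have := LinearMap.congr_fun hnat (D.Δ α β x)
  simp only [LinearMap.comp_apply, LinearEquiv.coe_coe] at this
  rw [this, hμ, map_smul]

end HopfGCoalgebra

open HopfGCoalgebra in
/-- The defining relation of the symmetrised right `G`-integral: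
`μ̃_{αβ}(x₍₁₎) · S_{β⁻¹}(x₍₂₎) y = μ̃_α(x) · g_β y`, where
`Δ_{αβ,β⁻¹}(x) = x₍₁₎ ⊗ x₍₂₎` for `x ∈ H_α = H_{(αβ)β⁻¹}`. -/
theorem symmetrised_right_integral_relation
    {k G : Type} [Field k] [Group G] {H : G → Type}
    [∀ γ : G, Ring (H γ)] [∀ γ : G, Algebra k (H γ)]
    (D : HopfGCoalgebra k G H) (g : ∀ γ : G, (H γ)ˣ) (hpiv : D.IsPivot g)
    (μ : ∀ γ : G, H γ →ₗ[k] k) (hμ : D.IsRightIntegral μ) :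
    ∀ (α β : G) (x : H α) (y : H β),
      (TensorProduct.lid k (H β))
        ((TensorProduct.map
            (μ (α * β) ∘ₗ LinearMap.mulLeft k ((g (α * β) : H (α * β))))
            (LinearMap.mulRight k y ∘ₗ (castAlg k (inv_inv β)).toLinearMap ∘ₗ D.S β⁻¹))
          (D.Δ (α * β) β⁻¹ (castAlg k (mul_inv_cancel_right α β).symm x)))
        = μ α ((g α : H α) * x) • ((g β : H β) * y) := by
  intro α β x y
  set e := castAlg (H := H) k (mul_inv_cancel_right α β).symm
  set F := LinearMap.mulRight k y ∘ₗ (castAlg k (inv_inv β)).toLinearMap ∘ₗ D.S β⁻¹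
  set T := F ∘ₗ LinearMap.mulLeft k (↑(g β⁻¹)⁻¹ : H β⁻¹)
  have hF : F = T ∘ₗ LinearMap.mulLeft k (g β⁻¹ : H β⁻¹) := by
    ext z; simp [T]
  have hΔ : TensorProduct.map (LinearMap.mulLeft k (g (α * β) : H (α * β)))
        (LinearMap.mulLeft k (g β⁻¹ : H β⁻¹)) (D.Δ (α * β) β⁻¹ (e x))
      = D.Δ (α * β) β⁻¹ (e ((g α : H α) * x)) := by
    rw [← LinearMap.mulLeft_tmul, LinearMap.mulLeft_apply, ← hpiv.delta, ← map_mul, map_mul e,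
      castAlg_unit]
  calc _ = TensorProduct.lid k (H β) (TensorProduct.map (μ (α * β)) T
          (TensorProduct.map (LinearMap.mulLeft k (g (α * β) : H (α * β)))
            (LinearMap.mulLeft k (g β⁻¹ : H β⁻¹)) (D.Δ (α * β) β⁻¹ (e x)))) := by
        rw [hF, TensorProduct.map_comp]; rfl
    _ = μ α ((g α : H α) * x) • T 1 := by
        rw [hΔ, hμ.lid_map_Δ, map_castAlg]
    _ = μ α ((g α : H α) * x) • ((g β : H β) * y) := by
        simp [T, F, hpiv.castAlg_S_inv]
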